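/- Let s ≠ 1 be a real number and n ≥ 3, and suppose T : Fin n → Fin n → Fin n → ℂ (antisymmetric in its last two arguments) and a covariant derivative D : (Fin n)⁴ → ℂ (denoted T^ℓ_{ij,k}) satisfy: (i) T^ℓ_{ij,k} − T^ℓ_{ik,j} = ∑_r [2(1−s)·T^ℓ_{ir}·T^r_{jk} + s·T^ℓ_{jr}·T^r_{ik} − s·T^ℓ_{kr}·T^r_{ij}], and (ii) ∑_r [T^ℓ_{ir}T^r_{jk} + T^ℓ_{jr}T^r_{ki} + T^ℓ_{kr}T^r_{ij}] = 0 for all indices. Then T^ℓ_{ij,k} − T^ℓ_{ik,j} = (2−s)·∑_r T^ℓ_{ir}·T^r_{jk} for all i, j, k, ℓ. -/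

import Mathlib

open Finset

theorem sum_torsion_quadratic_eq_sub_cyclic {R ι : Type*} [CommRing R] [Fintype ι]
    (s : R) (T : ι → ι → ι → R) (hT : ∀ l i j, T l i j = -T l j i) (l i j k : ι) :
    ∑ r, (2 * (1 - s) * T l i r * T r j k + s * T l j r * T r i k - s * T l k r * T r i j)
      = (2 - s) * ∑ r, T l i r * T r j k
        - s * ∑ r, (T l i r * T r j k + T l j r * T r k i + T l k r * T r i j) := by
  rw [mul_sum, mul_sum, ← sum_sub_distrib]
  refine sum_congr rfl fun r _ => ?_
  rw [hT r i k]
  ring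

theorem stmt_17_general (s : ℝ) (n : ℕ)
    (T : Fin n → Fin n → Fin n → ℂ) (hT : ∀ l i j, T l i j = - T l j i)
    (D : Fin n → Fin n → Fin n → Fin n → ℂ)
    (h1 : ∀ l i j k, D l i j k - D l i k j =
      ∑ r, (2 * (1 - (s : ℂ)) * T l i r * T r j k
        + (s : ℂ) * T l j r * T r i k - (s : ℂ) * T l k r * T r i j))
    (h2 : ∀ l i j k, ∑ r, (T l i r * T r j k + T l j r * T r k i
        + T l k r * T r i j) = 0) :
    ∀ l i j k, D l i j k - D l i k j = (2 - (s : ℂ)) * ∑ r, T l i r * T r j k := by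
  intro l i j k
  rw [h1, sum_torsion_quadratic_eq_sub_cyclic (s : ℂ) T hT, h2, mul_zero, sub_zero]

/-- Lemma 3.2: For real `s ≠ 1`, `n ≥ 3`, torsion
`T : Fin n → Fin n → Fin n → ℂ` antisymmetric in its last two arguments, and a
covariant derivative `D ℓ i j k = T^ℓ_{ij,k}` satisfying identities (i) and (ii),
one has `T^ℓ_{ij,k} - T^ℓ_{ik,j} = (2-s) ∑_r T^ℓ_{ir} T^r_{jk}`. -/
theorem stmt_17 (s : ℝ) (hs : s ≠ 1) (n : ℕ) (hn : 3 ≤ n)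
    (T : Fin n → Fin n → Fin n → ℂ) (hT : ∀ l i j, T l i j = - T l j i)
    (D : Fin n → Fin n → Fin n → Fin n → ℂ)
    (h1 : ∀ l i j k, D l i j k - D l i k j =
      ∑ r, (2 * (1 - (s : ℂ)) * T l i r * T r j k
        + (s : ℂ) * T l j r * T r i k - (s : ℂ) * T l k r * T r i j))
    (h2 : ∀ l i j k, ∑ r, (T l i r * T r j k + T l j r * T r k i
        + T l k r * T r i j) = 0) :
    ∀ l i j k, D l i j k - D l i k j = (2 - (s : ℂ)) * ∑ r, T l i r * T r j k :=
  stmt_17_general s n T hT D h1 h2
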